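/- arXiv:2108.01990 — 7 statements merged into one kernel-verified Lean document; each statement's English description precedes it below -/
import Mathlib

section
/- The number of Lyndon words of length n over an alphabet of size q equals (1/n) · ∑_{d | n} μ(n/d) · q^d, where μ is the Möbius function. -/
/-- Rotation equivalence on words of length `n` over an alphabet of size `q`. -/
def rotSetoid (n q : ℕ) : Setoid (ZMod n → Fin q) where
  r u v := ∃ s : ZMod n, (fun i => u (i + s)) = v
  iseqv := by
    refine ⟨fun u => ⟨0, by funext i; rw [add_zero]⟩, ?_, ?_⟩
    · rintro u v ⟨s, rfl⟩
      exact ⟨-s, by funext i; simp⟩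
    · rintro u v w ⟨s, rfl⟩ ⟨t, rfl⟩
      exact ⟨t + s, by funext i; show u (i + (t + s)) = u (i + t + s); rw [add_assoc]⟩

/-- A word `w` of length `n` is aperiodic if it is not the tiling (power) of a
word of a strictly shorter length `d` with `d ∣ n`. -/
def Aperiodic1D (n q : ℕ) (w : ZMod n → Fin q) : Prop :=
  ∀ d : ℕ, d ∣ n → d < n → ¬ ∀ i : ZMod n, w (i + (d : ZMod n)) = w i

/-- `lyndonCount n q` is the number of aperiodic necklaces (Lyndon words) of
length `n` over an alphabet of size `q`, i.e. rotation classes of aperiodic words. -/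
noncomputable def lyndonCount (n q : ℕ) : ℕ :=
  Nat.card {c : Quotient (rotSetoid n q) //
    ∃ w : ZMod n → Fin q, Quotient.mk (rotSetoid n q) w = c ∧ Aperiodic1D n q w}

/-!
Every word `u` of length `n` has a least period `d`, which divides `n`, and `u` is then the
`n / d`-fold repetition of an aperiodic word of length `d`. Writing `A d` for the number of
aperiodic words of length `d`, this gives `∑_{d ∣ n} A d = q ^ n`, so Möbius inversion yields
`A n = ∑_{d ∣ n} μ (n / d) q ^ d`. The rotations act freely on aperiodic words, so each Lyndon
class consists of exactly `n` words and `A n = n · lyndonCount n q`.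
-/

open ArithmeticFunction

namespace CyclicWord

variable {n : ℕ} {α : Type*}

def periods (u : ZMod n → α) : AddSubgroup (ZMod n) where
  carrier := {s | ∀ i, u (i + s) = u i}
  zero_mem' := by
    intro i
    rw [add_zero]
  add_mem' := by
    intro a b ha hb i
    rw [← add_assoc, hb, ha]
  neg_mem' := by
    intro s hs i
    simpa using (hs (i + -s)).symm

theorem mem_periods {u : ZMod n → α} {s : ZMod n} : s ∈ periods u ↔ ∀ i, u (i + s) = u i :=
  Iff.rfl

theorem natCast_self_mem_periods (u : ZMod n → α) : (n : ZMod n) ∈ periods u := by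
  rw [ZMod.natCast_self]
  exact zero_mem _

theorem periods_rotate (u : ZMod n → α) (s : ZMod n) :
    periods (fun i => u (i + s)) = periods u := by
  ext t
  simp only [mem_periods]
  constructor
  · intro h i
    simpa [add_right_comm] using h (i - s)
  · intro h i
    simpa [add_right_comm] using h (i + s)

theorem rotate_injective {u : ZMod n → α} (hu : periods u = ⊥) :
    Function.Injective fun (s : ZMod n) i => u (i + s) := by
  intro s t hst
  have hper : s - t ∈ periods u := fun i => by
    rw [show i + (s - t) = i - t + s by abel]
    simpa using congrFun hst (i - t)
  rwa [hu, AddSubgroup.mem_bot, sub_eq_zero] at hper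

noncomputable def minPeriod (u : ZMod n → α) : ℕ :=
  sInf {k | 0 < k ∧ (k : ZMod n) ∈ periods u}

theorem minPeriod_le {u : ZMod n → α} {k : ℕ} (hk : 0 < k) (h : (k : ZMod n) ∈ periods u) :
    minPeriod u ≤ k :=
  Nat.sInf_le ⟨hk, h⟩

section MinPeriod

variable [NeZero n]

theorem minPeriod_pos_and_mem (u : ZMod n → α) :
    0 < minPeriod u ∧ (minPeriod u : ZMod n) ∈ periods u :=
  Nat.sInf_mem (s := {k | 0 < k ∧ (k : ZMod n) ∈ periods u})
    ⟨n, NeZero.pos n, natCast_self_mem_periods u⟩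

theorem minPeriod_pos (u : ZMod n → α) : 0 < minPeriod u :=
  (minPeriod_pos_and_mem u).1

theorem natCast_minPeriod_mem_periods (u : ZMod n → α) : (minPeriod u : ZMod n) ∈ periods u :=
  (minPeriod_pos_and_mem u).2

theorem minPeriod_dvd (u : ZMod n → α) : minPeriod u ∣ n := by
  set m := minPeriod u
  -- `n % m` is again a period, and it is smaller than `m`
  have hmod : ((n % m : ℕ) : ZMod n) ∈ periods u := by
    have : ((n % m : ℕ) : ZMod n) = -((n / m) • (m : ZMod n)) := by
      rw [eq_neg_iff_add_eq_zero, nsmul_eq_mul, ← Nat.cast_mul, ← Nat.cast_add,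
        Nat.mod_add_div', ZMod.natCast_self]
    rw [this]
    exact neg_mem (nsmul_mem (natCast_minPeriod_mem_periods u) _)
  refine Nat.dvd_of_mod_eq_zero (Nat.eq_zero_of_not_pos fun hpos => ?_)
  exact (Nat.mod_lt n (minPeriod_pos u)).not_ge (minPeriod_le hpos hmod)

theorem periods_eq_bot_of_minPeriod_eq {u : ZMod n → α} (h : minPeriod u = n) :
    periods u = ⊥ := by
  refine (AddSubgroup.eq_bot_iff_forall _).2 fun s hs => ?_
  by_contra hne
  have hle := minPeriod_le (ZMod.val_pos.2 hne) (by rwa [ZMod.natCast_zmod_val])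
  rw [h] at hle
  exact s.val_lt.not_ge hle

end MinPeriod

section Repetition

variable {d : ℕ}

theorem natCast_mem_periods_comp_castHom_iff (hd : d ∣ n) (w : ZMod d → α) (k : ℕ) :
    (k : ZMod n) ∈ periods (w ∘ ZMod.castHom hd (ZMod d)) ↔ (k : ZMod d) ∈ periods w := by
  simp only [mem_periods, Function.comp_apply, map_add, map_natCast]
  exact ((ZMod.castHom_surjective hd).forall (p := fun j => w (j + k) = w j)).symm

theorem minPeriod_comp_castHom (hd : d ∣ n) (w : ZMod d → α) :
    minPeriod (w ∘ ZMod.castHom hd (ZMod d)) = minPeriod w := by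
  simp only [minPeriod, natCast_mem_periods_comp_castHom_iff]

theorem exists_comp_castHom_eq [NeZero n] (hd : d ∣ n) {u : ZMod n → α}
    (hu : (d : ZMod n) ∈ periods u) :
    ∃ w : ZMod d → α, w ∘ ZMod.castHom hd (ZMod d) = u := by
  -- the fibres of the reduction mod `d` are cosets of the multiples of `d`
  have hfiber : ∀ a b, ZMod.castHom hd (ZMod d) a = ZMod.castHom hd (ZMod d) b → u a = u b := by
    intro a b hab
    obtain ⟨m, hm⟩ : d ∣ (a - b).val := by
      rw [← ZMod.natCast_eq_zero_iff, ← map_natCast (ZMod.castHom hd (ZMod d)),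
        ZMod.natCast_zmod_val, map_sub, hab, sub_self]
    have hsub : a - b ∈ periods u := by
      rw [← ZMod.natCast_zmod_val (a - b), hm, mul_comm, Nat.cast_mul, ← nsmul_eq_mul]
      exact nsmul_mem hu m
    simpa using hsub b
  have hsurj := ZMod.castHom_surjective hd
  exact ⟨u ∘ Function.surjInv hsurj,
    funext fun i => hfiber _ _ (Function.surjInv_eq hsurj _)⟩

theorem card_minPeriod_eq [NeZero n] (hd : d ∣ n) :
    Nat.card {w : ZMod d → α // minPeriod w = d} =
      Nat.card {u : ZMod n → α // minPeriod u = d} := by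
  refine Nat.card_eq_of_bijective
    (fun w => ⟨w.1 ∘ ZMod.castHom hd (ZMod d), (minPeriod_comp_castHom hd w.1).trans w.2⟩)
    ⟨fun w w' h => Subtype.ext ((ZMod.castHom_surjective hd).injective_comp_right
      (congrArg Subtype.val h)), ?_⟩
  rintro ⟨u, hu⟩
  obtain ⟨w, rfl⟩ := exists_comp_castHom_eq hd (hu ▸ natCast_minPeriod_mem_periods u)
  exact ⟨⟨w, (minPeriod_comp_castHom hd w).symm.trans hu⟩, rfl⟩

end Repetition

theorem sum_card_minPeriod_eq [NeZero n] [Fintype α] :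
    ∑ d ∈ n.divisors, Nat.card {w : ZMod d → α // minPeriod w = d} =
      Fintype.card α ^ n := by
  classical
  have hfiber := Finset.card_eq_sum_card_fiberwise (s := (Finset.univ : Finset (ZMod n → α)))
    (t := n.divisors) (f := minPeriod)
    fun u _ => Nat.mem_divisors.2 ⟨minPeriod_dvd u, NeZero.ne n⟩
  rw [Finset.card_univ, Fintype.card_fun, ZMod.card] at hfiber
  rw [hfiber]
  refine Finset.sum_congr rfl fun d hd => ?_
  rw [card_minPeriod_eq (Nat.dvd_of_mem_divisors hd), Nat.card_eq_fintype_card,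
    Fintype.card_subtype]

end CyclicWord

open CyclicWord

theorem aperiodic_iff_minPeriod_eq {n q : ℕ} [NeZero n] {u : ZMod n → Fin q} :
    Aperiodic1D n q u ↔ minPeriod u = n := by
  constructor
  · intro h
    by_contra hne
    have hle := Nat.le_of_dvd (NeZero.pos n) (minPeriod_dvd u)
    exact h _ (minPeriod_dvd u) (hle.lt_of_ne hne) (natCast_minPeriod_mem_periods u)
  · rintro h d hdvd hlt hper
    exact hlt.not_ge (h ▸ minPeriod_le (Nat.pos_of_dvd_of_pos hdvd (NeZero.pos n)) hper)

theorem aperiodic_rotate {n q : ℕ} {u : ZMod n → Fin q} (hu : Aperiodic1D n q u) (s : ZMod n) :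
    Aperiodic1D n q fun i => u (i + s) := fun d hd hlt hper =>
  hu d hd hlt (le_of_eq (periods_rotate u s) hper)

theorem sum_card_aperiodic (q : ℕ) {n : ℕ} (hn : 0 < n) :
    ∑ d ∈ n.divisors, Nat.card {w : ZMod d → Fin q // Aperiodic1D d q w} = q ^ n := by
  have := NeZero.of_pos hn
  calc ∑ d ∈ n.divisors, Nat.card {w : ZMod d → Fin q // Aperiodic1D d q w}
      = ∑ d ∈ n.divisors, Nat.card {w : ZMod d → Fin q // minPeriod w = d} := by
        refine Finset.sum_congr rfl fun d hd => ?_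
        have := NeZero.of_pos (Nat.pos_of_mem_divisors hd)
        exact Nat.card_congr (Equiv.subtypeEquivRight fun w => aperiodic_iff_minPeriod_eq)
    _ = q ^ n := by rw [sum_card_minPeriod_eq, Fintype.card_fin]

theorem mk_rotate {n q : ℕ} (u : ZMod n → Fin q) (s : ZMod n) :
    Quotient.mk (rotSetoid n q) (fun i => u (i + s)) = Quotient.mk (rotSetoid n q) u :=
  (Quotient.sound (show ∃ t, (fun i => u (i + t)) = fun i => u (i + s) from ⟨s, rfl⟩)).symm

theorem aperiodic_out {n q : ℕ} {c : Quotient (rotSetoid n q)}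
    (hc : ∃ w, Quotient.mk (rotSetoid n q) w = c ∧ Aperiodic1D n q w) :
    Aperiodic1D n q c.out := by
  obtain ⟨w, rfl, hw⟩ := hc
  obtain ⟨s, hs⟩ : ∃ s : ZMod n, (fun i => w (i + s)) = (Quotient.mk (rotSetoid n q) w).out :=
    Setoid.symm' (rotSetoid n q) (Quotient.mk_out w)
  exact hs ▸ aperiodic_rotate hw s

theorem card_aperiodic_eq_mul_lyndonCount (n q : ℕ) [NeZero n] :
    Nat.card {w : ZMod n → Fin q // Aperiodic1D n q w} = n * lyndonCount n q := by
  let S := rotSetoid n q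
  let rotateOut : {c : Quotient S // ∃ w, Quotient.mk S w = c ∧ Aperiodic1D n q w} × ZMod n →
      {w : ZMod n → Fin q // Aperiodic1D n q w} :=
    fun p => ⟨fun i => p.1.1.out (i + p.2), aperiodic_rotate (aperiodic_out p.1.2) p.2⟩
  have hbij : Function.Bijective rotateOut := by
    constructor
    · rintro ⟨c, s⟩ ⟨c', s'⟩ h
      have hrot : (fun i => c.1.out (i + s)) = fun i => c'.1.out (i + s') :=
        congrArg Subtype.val h
      have hc : Quotient.mk S c.1.out = Quotient.mk S c'.1.out := by
        rw [← mk_rotate c.1.out s, ← mk_rotate c'.1.out s', hrot]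
      rw [Quotient.out_eq, Quotient.out_eq] at hc
      obtain rfl : c = c' := Subtype.ext hc
      have hfree :=
        periods_eq_bot_of_minPeriod_eq (aperiodic_iff_minPeriod_eq.1 (aperiodic_out c.2))
      rw [rotate_injective hfree hrot]
    · rintro ⟨w, hw⟩
      obtain ⟨s, hs⟩ : ∃ s : ZMod n, (fun i => (Quotient.mk S w).out (i + s)) = w :=
        Quotient.mk_out w
      exact ⟨(⟨Quotient.mk S w, w, rfl, hw⟩, s), Subtype.ext hs⟩
  rw [← Nat.card_eq_of_bijective rotateOut hbij, Nat.card_prod, Nat.card_zmod, mul_comm,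
    lyndonCount]

theorem lyndon_count_moebius_general (n q : ℕ) :
    (n : ℤ) * lyndonCount n q =
      ∑ d ∈ n.divisors, ArithmeticFunction.moebius (n / d) * (q : ℤ) ^ d := by
  rcases Nat.eq_zero_or_pos n with rfl | hn
  · simp
  have := NeZero.of_pos hn
  have hinv := (sum_eq_iff_sum_mul_moebius_eq
    (f := fun d => (Nat.card {w : ZMod d → Fin q // Aperiodic1D d q w} : ℤ))
    (g := fun m => (q : ℤ) ^ m)).1 (fun m hm => by exact_mod_cast sum_card_aperiodic q hm) n hn
  simp only [Int.cast_id] at hinv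
  rw [← Nat.sum_divisorsAntidiagonal' fun a b => moebius a * (q : ℤ) ^ b, hinv,
    card_aperiodic_eq_mul_lyndonCount, Nat.cast_mul]

/-- The number of Lyndon words (aperiodic necklaces) of length `n` over an
alphabet of size `q` equals `(1/n) · ∑_{d ∣ n} μ(n/d) · q^d`. -/
theorem lyndon_count_moebius (n q : ℕ) (hn : 0 < n) :
    (n : ℤ) * lyndonCount n q =
      ∑ d ∈ n.divisors, ArithmeticFunction.moebius (n / d) * (q : ℤ) ^ d :=
  lyndon_count_moebius_general n q
end

section
/- The number of orbits of Σ^{(n_1,…,n_d)} (d-dimensional arrays of size n_1 × ⋯ × n_d over an alphabet Σ of size q) under the translation action of Z_{n_1} × ⋯ × Z_{n_d} equals (1/N) · ∑_{f_1 | n_1} φ(f_1) ∑_{f_2 | n_2} φ(f_2) ⋯ ∑_{f_d | n_d} φ(f_d) · q^{N / lcm(f_1,…,f_d)}, where N = n_1 ⋯ n_d. -/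
/-!
Burnside's lemma counts the orbits of `G = ∏ ZMod (n i)` on words `G → Fin q` as the average
number of words fixed by `g ∈ G`. A word is fixed by `g` exactly when it is constant on the cosets
of `⟨g⟩`, so there are `q ^ (N / ord g)` of them, and `ord g` is the lcm of the orders of the
coordinates of `g`. Since `ZMod (n i)` has `φ f` elements of order `f` for each `f ∣ n i`,
grouping the sum by the tuple of coordinate orders gives the formula.
-/

/-- Translation equivalence on `d`-dimensional words of size `(n 0, …, n (d-1))`
over an alphabet of size `q`: `u ~ v` iff `v` is a coordinatewise cyclic
translation of `u`. The equivalence classes are multidimensional necklaces. -/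
def transSetoid (d q : ℕ) (n : Fin d → ℕ) :
    Setoid (((i : Fin d) → ZMod (n i)) → Fin q) where
  r u v := ∃ g : (i : Fin d) → ZMod (n i), (fun p => u (p + g)) = v
  iseqv := by
    refine ⟨fun u => ⟨0, by funext p; rw [add_zero]⟩, ?_, ?_⟩
    · rintro u v ⟨g, rfl⟩
      exact ⟨-g, by funext p; simp⟩
    · rintro u v w ⟨g, rfl⟩ ⟨h, rfl⟩
      exact ⟨h + g, by funext p; show u (p + (h + g)) = u (p + h + g); rw [add_assoc]⟩

open Finset

-- `(g +ᵥ u) p = u (-g + p)`: the translation action of `G` on words `G → α`.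
attribute [local instance] arrowAddAction

theorem AddSubgroup.index_zmultiples {G : Type*} [AddGroup G] [Finite G] (g : G) :
    (AddSubgroup.zmultiples g).index = Nat.card G / addOrderOf g := by
  rw [← AddSubgroup.index_mul_card (AddSubgroup.zmultiples g), Nat.card_zmultiples,
    Nat.mul_div_cancel _ (addOrderOf_pos g)]

namespace AddAction

variable {G α : Type*} [AddCommGroup G]

theorem mem_fixedBy_arrow_iff {g : G} {u : G → α} :
    u ∈ fixedBy (G → α) g ↔
      QuotientAddGroup.leftRel (AddSubgroup.zmultiples g) ≤ Setoid.ker u := by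
  constructor
  · intro hu a b hab
    have := congrFun (vadd_eq_self_of_mem_zmultiples (QuotientAddGroup.leftRel_apply.mp hab) hu) b
    change u (-(-a + b) + b) = u b at this
    rwa [neg_add_rev, neg_neg, neg_add_cancel_comm] at this
  · intro hu
    funext p
    exact (hu (QuotientAddGroup.leftRel_apply.mpr (by simp))).symm

def fixedByArrowEquiv (g : G) :
    fixedBy (G → α) g ≃ (G ⧸ AddSubgroup.zmultiples g → α) :=
  (Equiv.subtypeEquivRight fun _ => mem_fixedBy_arrow_iff).trans (Setoid.liftEquiv _)

theorem card_fixedBy_arrow [Finite G] (g : G) :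
    Nat.card (fixedBy (G → α) g) = Nat.card α ^ (Nat.card G / addOrderOf g) := by
  rw [Nat.card_congr (fixedByArrowEquiv g), Nat.card_fun, ← AddSubgroup.index_zmultiples]
  rfl

end AddAction

theorem transSetoid_eq_orbitRel (d q : ℕ) (n : Fin d → ℕ) :
    transSetoid d q n =
      AddAction.orbitRel ((i : Fin d) → ZMod (n i)) (((i : Fin d) → ZMod (n i)) → Fin q) := by
  ext u v
  refine ⟨fun ⟨g, hg⟩ => ⟨g, ?_⟩, fun ⟨g, hg⟩ => ⟨g, ?_⟩⟩ <;> subst hg <;> funext p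
  · show u (-g + p + g) = u p
    simp
  · show v (-g + (p + g)) = v p
    simp

section CyclicProduct

variable {ι : Type*} [Fintype ι] [DecidableEq ι] {G : ι → Type*} [∀ i, AddGroup (G i)]
  [∀ i, Fintype (G i)] [∀ i, IsAddCyclic (G i)]

theorem card_addOrderOf_pi_eq_prod_totient [∀ i, DecidableEq (G i)] {f : ι → ℕ}
    (hf : ∀ i, f i ∣ Fintype.card (G i)) :
    #{g : ∀ i, G i | (fun i => addOrderOf (g i)) = f} = ∏ i, (f i).totient := by
  have fiber_eq : ({g : ∀ i, G i | (fun i => addOrderOf (g i)) = f} : Finset _) =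
      Fintype.piFinset fun i => {x : G i | addOrderOf x = f i} := by
    ext g
    simp [funext_iff]
  rw [fiber_eq, Fintype.card_piFinset]
  exact Finset.prod_congr rfl fun i _ => IsAddCyclic.card_addOrderOf_eq_totient (hf i)

theorem sum_addOrderOf_pi_eq_sum_divisors {M : Type*} [AddCommMonoid M] (F : (ι → ℕ) → M) :
    ∑ g : ∀ i, G i, F (fun i => addOrderOf (g i)) =
      ∑ f ∈ Fintype.piFinset (fun i => (Fintype.card (G i)).divisors),
        (∏ i, (f i).totient) • F f := by
  classical
  have orders_mem : ∀ g : ∀ i, G i,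
      (fun i => addOrderOf (g i)) ∈ Fintype.piFinset fun i => (Fintype.card (G i)).divisors :=
    fun g => Fintype.mem_piFinset.mpr fun i =>
      Nat.mem_divisors.mpr ⟨addOrderOf_dvd_card, Fintype.card_ne_zero⟩
  rw [← Finset.sum_fiberwise_of_maps_to fun g _ => orders_mem g]
  refine Finset.sum_congr rfl fun f hf => ?_
  rw [Finset.sum_congr rfl fun g hg => congrArg F (Finset.mem_filter.mp hg).2, Finset.sum_const,
    card_addOrderOf_pi_eq_prod_totient fun i =>
      Nat.dvd_of_mem_divisors (Fintype.mem_piFinset.mp hf i)]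

end CyclicProduct

/-- The number of `d`-dimensional necklaces of size `(n_1, …, n_d)` over an
alphabet of size `q` equals
`(1/N) ∑_{f_1 ∣ n_1} φ(f_1) ⋯ ∑_{f_d ∣ n_d} φ(f_d) q^{N / lcm(f_1,…,f_d)}`
where `N = n_1 ⋯ n_d`. -/
theorem multidim_necklace_count (d q : ℕ) (n : Fin d → ℕ) (hn : ∀ i, 0 < n i) :
    (∏ i, n i) * Nat.card (Quotient (transSetoid d q n)) =
      ∑ f ∈ Fintype.piFinset (fun i => (n i).divisors),
        (∏ i, Nat.totient (f i)) * q ^ ((∏ i, n i) / Finset.univ.lcm f) := by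
  have : ∀ i, NeZero (n i) := fun i => ⟨(hn i).ne'⟩
  classical
  have hN : Nat.card ((i : Fin d) → ZMod (n i)) = ∏ i, n i := by simp
  calc (∏ i, n i) * Nat.card (Quotient (transSetoid d q n))
      = ∑ g : (i : Fin d) → ZMod (n i), Fintype.card (AddAction.fixedBy _ g) := by
        rw [transSetoid_eq_orbitRel, ← hN, Nat.card_eq_fintype_card, Nat.card_eq_fintype_card,
          mul_comm]
        exact (AddAction.sum_card_fixedBy_eq_card_orbits_mul_card_addGroup _ _).symm
    _ = ∑ g : (i : Fin d) → ZMod (n i), q ^ ((∏ i, n i) / univ.lcm fun i => addOrderOf (g i)) := by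
        refine Finset.sum_congr rfl fun g _ => ?_
        rw [← Nat.card_eq_fintype_card, AddAction.card_fixedBy_arrow, Pi.addOrderOf, hN,
          Nat.card_fin]
    _ = _ := by
        rw [sum_addOrderOf_pi_eq_sum_divisors fun f => q ^ ((∏ i, n i) / univ.lcm f)]
        simp_rw [ZMod.card, smul_eq_mul]
end

section
/- For two-dimensional words: the number of orbits of Σ^{n_1 × n_2} (|Σ| = q) under the action of Z_{n_1} × Z_{n_2} by row and column cyclic shifts equals (1/(n_1 n_2)) · ∑_{f_1 | n_1} ∑_{f_2 | n_2} φ(f_1) φ(f_2) q^{n_1 n_2 / lcm(f_1, f_2)}. -/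
/-- Translation equivalence on 2-dimensional words of size `(n₁, n₂)` over an
alphabet of size `q`: `u ~ v` iff `v` is obtained from `u` by cyclically
shifting rows and columns. -/
def transSetoid2 (n₁ n₂ q : ℕ) : Setoid (ZMod n₁ × ZMod n₂ → Fin q) where
  r u v := ∃ g : ZMod n₁ × ZMod n₂, (fun p => u (p + g)) = v
  iseqv := by
    refine ⟨fun u => ⟨0, by funext p; rw [add_zero]⟩, ?_, ?_⟩
    · rintro u v ⟨g, rfl⟩
      exact ⟨-g, by funext p; simp⟩
    · rintro u v w ⟨g, rfl⟩ ⟨h, rfl⟩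
      exact ⟨h + g, by funext p; show u (p + (h + g)) = u (p + h + g); rw [add_assoc]⟩

/-! By Burnside's lemma, `n₁ n₂` times the number of orbits is the number of pairs `(g, u)` with
the word `u` fixed by the shift `g`. A word fixed by `g` is constant on the cosets of `⟨g⟩`, so
there are `q ^ (n₁ n₂ / ord g)` of them. Finally `ord (a, b) = lcm (ord a, ord b)`, and a cyclic
group of order `n` has `φ d` elements of order `d` for each `d ∣ n`. -/

section Translation

variable (G α : Type*) [AddGroup G]

/-- Only a local instance: on `G → G` it would clash with the pointwise action. -/
abbrev translationAction : AddAction G (G → α) where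
  vadd g u p := u (p + g)
  zero_vadd u := funext fun p => congrArg u (add_zero p)
  add_vadd g h u := funext fun p => congrArg u (add_assoc p g h).symm

attribute [local instance] translationAction

variable {G α}

theorem mem_fixedBy_translation_iff {g : G} {u : G → α} :
    u ∈ AddAction.fixedBy (G → α) g ↔
      QuotientAddGroup.leftRel (AddSubgroup.zmultiples g) ≤ Setoid.ker u := by
  refine ⟨fun hu x y hxy => ?_, fun hu => funext fun p => (hu ?_).symm⟩
  · obtain ⟨j, hj⟩ := AddSubgroup.mem_zmultiples_iff.mp (QuotientAddGroup.leftRel_apply.mp hxy)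
    have := congrFun (AddAction.mem_fixedBy_zsmul hu j) x
    rw [Setoid.ker_def, ← this]
    exact congrArg u (by rw [hj, add_neg_cancel_left])
  · rw [QuotientAddGroup.leftRel_apply, neg_add_cancel_left]
    exact AddSubgroup.mem_zmultiples g

theorem natCard_fixedBy_translation [Finite G] (g : G) :
    Nat.card (AddAction.fixedBy (G → α) g) = Nat.card α ^ (Nat.card G / addOrderOf g) := by
  have hfix : AddAction.fixedBy (G → α) g ≃ (G ⧸ AddSubgroup.zmultiples g → α) :=
    (Equiv.subtypeEquivRight fun _ => mem_fixedBy_translation_iff).trans (Setoid.liftEquiv _)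
  rw [Nat.card_congr hfix, Nat.card_fun, ← AddSubgroup.index_eq_card,
    ← (AddSubgroup.zmultiples g).card_mul_index, Nat.card_zmultiples,
    Nat.mul_div_cancel_left _ (addOrderOf_pos g)]

variable (G α) in
theorem natCard_quotient_translation_mul_natCard [Fintype G] [Finite α] :
    Nat.card (Quotient (AddAction.orbitRel G (G → α))) * Nat.card G =
      ∑ g : G, Nat.card α ^ (Nat.card G / addOrderOf g) := by
  classical
  have : Fintype α := Fintype.ofFinite α
  rw [← Finset.sum_congr rfl fun g _ => natCard_fixedBy_translation (α := α) g]
  simp only [Nat.card_eq_fintype_card]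
  exact (AddAction.sum_card_fixedBy_eq_card_orbits_mul_card_addGroup G (G → α)).symm

theorem transSetoid2_eq_orbitRel (n₁ n₂ q : ℕ) :
    transSetoid2 n₁ n₂ q =
      AddAction.orbitRel (ZMod n₁ × ZMod n₂) (ZMod n₁ × ZMod n₂ → Fin q) :=
  Setoid.ext fun _ _ => Setoid.comm' _

end Translation

theorem sum_addOrderOf_of_isAddCyclic {G M : Type*} [AddGroup G] [IsAddCyclic G] [Fintype G]
    [AddCommMonoid M] (F : ℕ → M) :
    ∑ a : G, F (addOrderOf a) = ∑ d ∈ (Nat.card G).divisors, Nat.totient d • F d := by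
  classical
  have horder_mem : ∀ a ∈ (Finset.univ : Finset G), addOrderOf a ∈ (Nat.card G).divisors :=
    fun a _ => Nat.mem_divisors.mpr ⟨addOrderOf_dvd_natCard a, Nat.card_pos.ne'⟩
  rw [← Finset.sum_fiberwise_of_maps_to horder_mem]
  refine Finset.sum_congr rfl fun d hd => ?_
  have hd_dvd : d ∣ Fintype.card G :=
    Nat.card_eq_fintype_card (α := G) ▸ (Nat.mem_divisors.mp hd).1
  rw [Finset.sum_congr rfl fun a ha => by rw [(Finset.mem_filter.mp ha).2], Finset.sum_const,
    IsAddCyclic.card_addOrderOf_eq_totient hd_dvd]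

theorem sum_addOrderOf_prod_of_isAddCyclic {G₁ G₂ M : Type*} [AddGroup G₁] [AddGroup G₂]
    [IsAddCyclic G₁] [IsAddCyclic G₂] [Fintype G₁] [Fintype G₂] [AddCommMonoid M]
    (F : ℕ → M) :
    ∑ g : G₁ × G₂, F (addOrderOf g) =
      ∑ d₁ ∈ (Nat.card G₁).divisors, ∑ d₂ ∈ (Nat.card G₂).divisors,
        (Nat.totient d₁ * Nat.totient d₂) • F (Nat.lcm d₁ d₂) := by
  simp only [Fintype.sum_prod_type, Prod.addOrderOf]
  calc ∑ a : G₁, ∑ b : G₂, F ((addOrderOf a).lcm (addOrderOf b))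
      = ∑ a : G₁, ∑ d₂ ∈ (Nat.card G₂).divisors,
          d₂.totient • F ((addOrderOf a).lcm d₂) :=
        Finset.sum_congr rfl fun a _ =>
          sum_addOrderOf_of_isAddCyclic fun d₂ => F ((addOrderOf a).lcm d₂)
    _ = ∑ d₁ ∈ (Nat.card G₁).divisors, d₁.totient •
          ∑ d₂ ∈ (Nat.card G₂).divisors, d₂.totient • F (d₁.lcm d₂) :=
        sum_addOrderOf_of_isAddCyclic fun d₁ =>
          ∑ d₂ ∈ (Nat.card G₂).divisors, d₂.totient • F (d₁.lcm d₂)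
    _ = _ := by simp only [Finset.smul_sum, smul_smul]

/-- The number of orbits of 2D words of size `(n₁, n₂)` over a `q`-letter
alphabet under the action of `Z_{n₁} × Z_{n₂}` equals
`(1/(n₁n₂)) ∑_{f₁ ∣ n₁} ∑_{f₂ ∣ n₂} φ(f₁) φ(f₂) q^{n₁n₂ / lcm(f₁,f₂)}`. -/
theorem two_dim_necklace_count (n₁ n₂ q : ℕ) (h₁ : 0 < n₁) (h₂ : 0 < n₂) :
    (n₁ * n₂) * Nat.card (Quotient (transSetoid2 n₁ n₂ q)) =
      ∑ f₁ ∈ n₁.divisors, ∑ f₂ ∈ n₂.divisors,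
        Nat.totient f₁ * Nat.totient f₂ * q ^ ((n₁ * n₂) / Nat.lcm f₁ f₂) := by
  have : NeZero n₁ := ⟨h₁.ne'⟩
  have : NeZero n₂ := ⟨h₂.ne'⟩
  have hburnside := natCard_quotient_translation_mul_natCard (ZMod n₁ × ZMod n₂) (Fin q)
  rw [Nat.card_prod, Nat.card_zmod, Nat.card_zmod, Nat.card_fin] at hburnside
  rw [transSetoid2_eq_orbitRel, mul_comm, hburnside,
    sum_addOrderOf_prod_of_isAddCyclic fun d => q ^ (n₁ * n₂ / d)]
  simp only [Nat.card_zmod, smul_eq_mul]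
end

section
/- Let N(f_1,…,f_d) denote the number of multidimensional necklaces of size (f_1,…,f_d) over an alphabet of size q, and L(n_1,…,n_d) the number of aperiodic multidimensional necklaces (Lyndon words). Then N(n_1,…,n_d) = ∑_{f_1 | n_1} ⋯ ∑_{f_d | n_d} L(f_1,…,f_d), and consequently L(n_1,…,n_d) = ∑_{f_1 | n_1} μ(n_1/f_1) ⋯ ∑_{f_d | n_d} μ(n_d/f_d) · N(f_1,…,f_d). -/
/-- The number `N(n_1,…,n_d)` of multidimensional necklaces of size
`(n 0, …, n (d-1))` over an alphabet of size `q`. -/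
noncomputable def nCount (d q : ℕ) (n : Fin d → ℕ) : ℕ :=
  Nat.card (Quotient (transSetoid d q n))

/-- A `d`-dimensional word `w` of size `n` is aperiodic if it is not a tiling
of a subword of size `m ≠ n` with `m i ∣ n i` for every `i`; equivalently, for
no such `m` is `w` invariant under the shift by `m i` in every dimension `i`. -/
def AperiodicMD (d q : ℕ) (n : Fin d → ℕ) (w : ((i : Fin d) → ZMod (n i)) → Fin q) : Prop :=
  ∀ m : Fin d → ℕ, (∀ i, m i ∣ n i) → m ≠ n →
    ¬ ∀ i : Fin d,
      (fun p => w (p + fun j => if j = i then ((m i : ℕ) : ZMod (n j)) else 0)) = w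

/-- The number `L(n_1,…,n_d)` of aperiodic multidimensional necklaces (Lyndon
words) of size `(n 0, …, n (d-1))` over an alphabet of size `q`. -/
noncomputable def lCount (d q : ℕ) (n : Fin d → ℕ) : ℕ :=
  Nat.card {c : Quotient (transSetoid d q n) //
    ∃ w : ((i : Fin d) → ZMod (n i)) → Fin q,
      Quotient.mk (transSetoid d q n) w = c ∧ AperiodicMD d q n w}

/-! Tiling an aperiodic word of size `f`, with `f i ∣ n i`, gives a word of size `n`, and every
word of size `n` is obtained in this way from exactly one aperiodic word up to translation. The
point is that the periods of an aperiodic word of size `f` in direction `i` are exactly the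
multiples of `f i` (the gcd of two periods is a period, and a smaller period would contradict
aperiodicity), and tiling does not change these periods; so the size `f` can be read off the tiled
word. Counting translation classes gives `N(n) = ∑_{f ∣ n} L(f)`, and the second identity is
Möbius inversion on a product of divisor lattices, which factors into one-dimensional
inversions. -/

open Finset Fintype Function ArithmeticFunction
open scoped ArithmeticFunction.Moebius

theorem Nat.sum_divisors_filter_dvd_moebius_div {g n : ℕ} (hn : n ≠ 0) :
    ∑ x ∈ n.divisors with g ∣ x, μ (n / x) = if n = g then 1 else 0 := by
  -- one-dimensional Möbius inversion of `m ↦ ∑_{x ∣ m} [x = g] = [g ∣ m]`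
  have h := (sum_eq_iff_sum_smul_moebius_eq (f := fun x => if x = g then (1 : ℤ) else 0)
    (g := fun x => if g ∣ x then 1 else 0)).mp
    (fun m hm => by simp [Finset.sum_ite_eq', Nat.mem_divisors, hm.ne']) n (Nat.pos_of_ne_zero hn)
  rw [Nat.sum_divisorsAntidiagonal' (f := fun x y => μ x • if g ∣ y then (1 : ℤ) else 0)] at h
  simpa [sum_filter] using h

theorem ne_zero_of_mem_piFinset_divisors {ι : Type*} [Fintype ι] [DecidableEq ι] {n f : ι → ℕ}
    (hf : f ∈ piFinset fun i => (n i).divisors) (i : ι) : f i ≠ 0 :=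
  (Nat.pos_of_mem_divisors (mem_piFinset.mp hf i)).ne'

theorem sum_piFinset_divisors_prod_moebius_smul {ι M : Type*} [Fintype ι] [DecidableEq ι]
    [AddCommGroup M] {F G : (ι → ℕ) → M} {n : ι → ℕ} (hn : ∀ i, n i ≠ 0)
    (hF : ∀ f ∈ piFinset fun i => (n i).divisors,
      F f = ∑ g ∈ piFinset fun i => (f i).divisors, G g) :
    ∑ f ∈ piFinset (fun i => (n i).divisors), (∏ i, μ (n i / f i)) • F f = G n := by
  have hmem : ∀ f g : ι → ℕ, f ∈ piFinset (fun i => (n i).divisors) ∧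
      g ∈ piFinset (fun i => (f i).divisors) ↔
        f ∈ piFinset (fun i => {x ∈ (n i).divisors | g i ∣ x}) ∧
          g ∈ piFinset (fun i => (n i).divisors) := by
    intro f g
    simp only [mem_piFinset, mem_filter, Nat.mem_divisors, hn, ne_eq, not_false_eq_true, and_true]
    exact ⟨fun ⟨hf, hg⟩ => ⟨fun i => ⟨hf i, (hg i).1⟩, fun i => (hg i).1.trans (hf i)⟩,
      fun ⟨hf, _⟩ => ⟨fun i => (hf i).1,
        fun i => ⟨(hf i).2, ne_zero_of_dvd_ne_zero (hn i) (hf i).1⟩⟩⟩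
  calc _ = ∑ f ∈ piFinset (fun i => (n i).divisors),
        ∑ g ∈ piFinset (fun i => (f i).divisors), (∏ i, μ (n i / f i)) • G g :=
        sum_congr rfl fun f hf => by rw [hF f hf, smul_sum]
    _ = ∑ g ∈ piFinset (fun i => (n i).divisors),
        ∑ f ∈ piFinset (fun i => {x ∈ (n i).divisors | g i ∣ x}), (∏ i, μ (n i / f i)) • G g :=
        sum_comm' hmem
    _ = ∑ g ∈ piFinset (fun i => (n i).divisors),
        (∏ i, ∑ x ∈ (n i).divisors with g i ∣ x, μ (n i / x)) • G g := by
        simp_rw [← sum_smul, prod_univ_sum]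
    _ = G n := by
        simp only [Nat.sum_divisors_filter_dvd_moebius_div (hn _), Fintype.prod_boole,
          ← funext_iff, ite_smul, one_smul, zero_smul, Finset.sum_ite_eq]
        exact if_pos (mem_piFinset.mpr fun i => Nat.mem_divisors_self _ (hn i))

namespace MultidimNecklace

variable {d q : ℕ} {α : Type*} {n f : Fin d → ℕ}

abbrev Torus (n : Fin d → ℕ) : Type := (i : Fin d) → ZMod (n i)

def periods (w : Torus n → α) : AddSubgroup (Torus n) where
  carrier := {g | (fun p => w (p + g)) = w}
  zero_mem' := by simp
  add_mem' {a b} ha hb := funext fun p => by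
    rw [← add_assoc]
    exact (congrFun hb (p + a)).trans (congrFun ha p)
  neg_mem' {a} ha := funext fun p => by
    simpa using (congrFun ha (p + -a)).symm

theorem mem_periods {w : Torus n → α} {g : Torus n} :
    g ∈ periods w ↔ (fun p => w (p + g)) = w :=
  Iff.rfl

theorem periods_comp_add_right (w : Torus n → α) (g : Torus n) :
    periods (fun p => w (p + g)) = periods w := by
  ext s
  simp only [mem_periods, funext_iff]
  constructor
  · intro hs p
    simpa [add_right_comm] using hs (p - g)
  · intro hs p
    rw [add_right_comm]
    exact hs (p + g)

def axisShift (n : Fin d → ℕ) (i : Fin d) : ℤ →+ Torus n :=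
  (AddMonoidHom.single (fun j => ZMod (n j)) i).comp (Int.castAddHom (ZMod (n i)))

theorem axisShift_apply (n : Fin d → ℕ) (i : Fin d) (k : ℤ) :
    axisShift n i k = Pi.single i (k : ZMod (n i)) :=
  rfl

theorem axisShift_natCast (n : Fin d → ℕ) (i : Fin d) (m : ℕ) :
    axisShift n i m = fun j => if j = i then (m : ZMod (n j)) else 0 := by
  funext j
  rcases eq_or_ne j i with rfl | hj
  · simp [axisShift_apply]
  · simp [axisShift_apply, hj]

def axisPeriods (w : Torus n → α) (i : Fin d) : AddSubgroup ℤ :=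
  (periods w).comap (axisShift n i)

theorem natCast_mem_axisPeriods (w : Torus n → α) (i : Fin d) : (n i : ℤ) ∈ axisPeriods w i := by
  simp [axisPeriods, axisShift_apply, zero_mem]

theorem axisPeriods_comp_add_right (w : Torus n → α) (g : Torus n) (i : Fin d) :
    axisPeriods (fun p => w (p + g)) i = axisPeriods w i := by
  rw [axisPeriods, periods_comp_add_right, axisPeriods]

theorem aperiodicMD_iff (w : Torus n → Fin q) :
    AperiodicMD d q n w ↔
      ∀ m : Fin d → ℕ, (∀ i, m i ∣ n i) → (∀ i, (m i : ℤ) ∈ axisPeriods w i) → m = n := by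
  simp only [AperiodicMD, ← axisShift_natCast]
  exact forall₂_congr fun m _ => not_imp_not

theorem AperiodicMD.comp_add_right {w : Torus n → Fin q} (hw : AperiodicMD d q n w)
    (g : Torus n) : AperiodicMD d q n (fun p => w (p + g)) := by
  simpa only [aperiodicMD_iff, axisPeriods_comp_add_right] using hw

theorem AperiodicMD.axisPeriods_eq {v : Torus f → Fin q} (hv : AperiodicMD d q f v) (i : Fin d) :
    axisPeriods v i = AddSubgroup.zmultiples (f i : ℤ) := by
  refine le_antisymm (fun k hk => ?_) (AddSubgroup.zmultiples_le.mpr (natCast_mem_axisPeriods v i))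
  set G := Int.gcd k (f i)
  have hG : (G : ℤ) ∈ axisPeriods v i := by
    rw [Int.gcd_eq_gcd_ab, mul_comm k, mul_comm (f i : ℤ)]
    exact add_mem (zsmul_mem hk _) (zsmul_mem (natCast_mem_axisPeriods v i) _)
  have hGf : update f i G = f := by
    refine (aperiodicMD_iff v).mp hv _ (fun j => ?_) (fun j => ?_) <;>
      rcases eq_or_ne j i with rfl | hj
    · simpa [G] using Int.ofNat_dvd.mp (Int.gcd_dvd_right k (f j))
    · simp [hj]
    · simpa using hG
    · simpa [hj] using natCast_mem_axisPeriods v j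
  rw [Int.mem_zmultiples_iff, ← show G = f i by simpa using congrFun hGf i]
  exact Int.gcd_dvd_left k (f i)

def proj (h : ∀ i, f i ∣ n i) : Torus n →+ Torus f :=
  AddMonoidHom.piMap fun i => (ZMod.castHom (h i) (ZMod (f i))).toAddMonoidHom

theorem proj_surjective (h : ∀ i, f i ∣ n i) : Surjective (proj h) :=
  Surjective.piMap fun i => ZMod.castHom_surjective (h i)

theorem proj_axisShift (h : ∀ i, f i ∣ n i) (i : Fin d) (k : ℤ) :
    proj h (axisShift n i k) = axisShift f i k := by
  funext j
  rcases eq_or_ne j i with rfl | hj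
  · simp [proj, axisShift_apply]
  · simp [proj, axisShift_apply, hj]

def tile (h : ∀ i, f i ∣ n i) (v : Torus f → α) : Torus n → α :=
  v ∘ proj h

theorem tile_injective (h : ∀ i, f i ∣ n i) : Injective (tile (α := α) h) :=
  (proj_surjective h).injective_comp_right

theorem tile_self (w : Torus n → α) : tile (fun _ => dvd_rfl) w = w := by
  funext p
  simp only [tile, comp_apply]
  congr 1
  funext i
  simp [proj, ZMod.castHom_self]

theorem tile_tile {m : Fin d → ℕ} (hm : ∀ i, m i ∣ n i) (hf : ∀ i, f i ∣ m i) (v : Torus f → α) :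
    tile hm (tile hf v) = tile (fun i => (hf i).trans (hm i)) v := by
  funext p
  simp only [tile, comp_apply]
  congr 1
  funext i
  exact RingHom.congr_fun (ZMod.castHom_comp (hf i) (hm i)) (p i)

theorem tile_comp_add_right (h : ∀ i, f i ∣ n i) (v : Torus f → α) (g : Torus n) :
    (fun p => tile h v (p + g)) = tile h (fun x => v (x + proj h g)) := by
  funext p
  simp [tile, map_add]

theorem periods_tile (h : ∀ i, f i ∣ n i) (v : Torus f → α) :
    periods (tile h v) = (periods v).comap (proj h) := by
  ext g
  simp only [AddSubgroup.mem_comap, mem_periods, tile_comp_add_right]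
  exact (tile_injective h).eq_iff

theorem axisPeriods_tile (h : ∀ i, f i ∣ n i) (v : Torus f → α) (i : Fin d) :
    axisPeriods (tile h v) i = axisPeriods v i := by
  ext k
  simp [axisPeriods, periods_tile, proj_axisShift]

theorem ker_proj_le_periods (h : ∀ i, f i ∣ n i) {w : Torus n → α}
    (hw : ∀ i, (f i : ℤ) ∈ axisPeriods w i) : (proj h).ker ≤ periods w := by
  intro p hp
  rw [← univ_sum_single p]
  refine sum_mem fun i _ => ?_
  have hpi : ((ZMod.cast (p i) : ℤ) : ZMod (f i)) = 0 := by
    have : ZMod.castHom (h i) (ZMod (f i)) (p i) = 0 := congrFun hp i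
    rwa [← ZMod.intCast_zmod_cast (p i), map_intCast] at this
  obtain ⟨c, hc⟩ := (ZMod.intCast_zmod_eq_zero_iff_dvd _ _).mp hpi
  rw [← ZMod.intCast_zmod_cast (p i), ← axisShift_apply, hc, mul_comm, ← smul_eq_mul, map_zsmul]
  exact zsmul_mem (AddSubgroup.mem_comap.mp (hw i)) c

theorem exists_tile_eq (h : ∀ i, f i ∣ n i) {w : Torus n → α}
    (hw : ∀ i, (f i : ℤ) ∈ axisPeriods w i) : ∃ v, tile h v = w := by
  refine ⟨w ∘ surjInv (proj_surjective h), funext fun p => ?_⟩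
  set p' := surjInv (proj_surjective h) (proj h p)
  have hker : p - p' ∈ (proj h).ker := by
    simp [p', map_sub, surjInv_eq (proj_surjective h)]
  show w p' = w p
  simpa using (congrFun (ker_proj_le_periods h hw hker) p').symm

theorem eq_of_tile_eq_tile {f' : Fin d → ℕ} {h : ∀ i, f i ∣ n i} {h' : ∀ i, f' i ∣ n i}
    {v : Torus f → Fin q} {v' : Torus f' → Fin q} (hv : AperiodicMD d q f v)
    (hv' : AperiodicMD d q f' v') (heq : tile h v = tile h' v') : f = f' := by
  funext i
  have hz : AddSubgroup.zmultiples (f i : ℤ) = AddSubgroup.zmultiples (f' i : ℤ) := by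
    rw [← AperiodicMD.axisPeriods_eq hv, ← AperiodicMD.axisPeriods_eq hv', ← axisPeriods_tile h,
      heq, axisPeriods_tile]
  refine Nat.dvd_antisymm (Int.natCast_dvd_natCast.mp ?_) (Int.natCast_dvd_natCast.mp ?_)
  · exact Int.mem_zmultiples_iff.mp (hz ▸ AddSubgroup.mem_zmultiples _)
  · exact Int.mem_zmultiples_iff.mp (hz ▸ AddSubgroup.mem_zmultiples _)

theorem exists_aperiodicMD_tile_eq (hn : ∀ i, n i ≠ 0) (w : Torus n → Fin q) :
    ∃ f : Fin d → ℕ, ∃ h : ∀ i, f i ∣ n i, ∃ v, AperiodicMD d q f v ∧ tile h v = w := by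
  induction n using WellFoundedLT.induction with
  | ind n ih =>
    by_cases hw : AperiodicMD d q n w
    · exact ⟨n, fun _ => dvd_rfl, w, hw, tile_self w⟩
    obtain ⟨m, hmn, hm, hne⟩ : ∃ m : Fin d → ℕ, (∀ i, m i ∣ n i) ∧
        (∀ i, (m i : ℤ) ∈ axisPeriods w i) ∧ m ≠ n := by
      simpa [aperiodicMD_iff] using hw
    obtain ⟨u, rfl⟩ := exists_tile_eq hmn hm
    have hlt : m < n :=
      lt_of_le_of_ne (fun i => Nat.le_of_dvd (Nat.pos_of_ne_zero (hn i)) (hmn i)) hne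
    obtain ⟨f, hfm, v, hv, hvu⟩ := ih m hlt (fun i => ne_zero_of_dvd_ne_zero (hn i) (hmn i)) u
    exact ⟨f, _, v, hv, by rw [← hvu, tile_tile]⟩

abbrev Necklace (d q : ℕ) (n : Fin d → ℕ) : Type := Quotient (transSetoid d q n)

abbrev LyndonNecklace (d q : ℕ) (n : Fin d → ℕ) : Type :=
  {c : Necklace d q n // ∃ w, Quotient.mk (transSetoid d q n) w = c ∧ AperiodicMD d q n w}

theorem finite_lyndonNecklace (hn : ∀ i, n i ≠ 0) : Finite (LyndonNecklace d q n) := by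
  have : ∀ i, NeZero (n i) := fun i => ⟨hn i⟩
  infer_instance

def tileNecklace (h : ∀ i, f i ∣ n i) : Necklace d q f → Necklace d q n :=
  Quotient.map (tile h) fun v v' ⟨g, hg⟩ =>
    ⟨surjInv (proj_surjective h) g, by rw [tile_comp_add_right, surjInv_eq (proj_surjective h), hg]⟩

variable (d q) in
def tileLyndon (n : Fin d → ℕ) :
    (Σ f : piFinset (fun i => (n i).divisors), LyndonNecklace d q f) → Necklace d q n :=
  fun x => tileNecklace (fun i => Nat.dvd_of_mem_divisors (mem_piFinset.mp x.1.2 i)) x.2.1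

theorem tileLyndon_bijective (hn : ∀ i, n i ≠ 0) : Bijective (tileLyndon d q n) := by
  constructor
  · rintro ⟨⟨f, hf⟩, _, v, rfl, hv⟩ ⟨⟨f', hf'⟩, _, v', rfl, hv'⟩ heq
    obtain ⟨g, hg⟩ := Quotient.exact heq
    rw [tile_comp_add_right] at hg
    obtain rfl := eq_of_tile_eq_tile (AperiodicMD.comp_add_right hv _) hv' hg
    obtain rfl := tile_injective _ hg
    exact Sigma.ext rfl (heq_of_eq (Subtype.ext (Quotient.sound ⟨_, rfl⟩)))
  · intro c
    induction c using Quotient.inductionOn with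
    | h w =>
      obtain ⟨f, h, v, hv, rfl⟩ := exists_aperiodicMD_tile_eq hn w
      have hf : f ∈ piFinset (fun i => (n i).divisors) :=
        mem_piFinset.mpr fun i => Nat.mem_divisors.mpr ⟨h i, hn i⟩
      exact ⟨⟨⟨f, hf⟩, _, v, rfl, hv⟩, rfl⟩

theorem nCount_eq_sum_lCount (hn : ∀ i, n i ≠ 0) :
    nCount d q n = ∑ f ∈ piFinset (fun i => (n i).divisors), lCount d q f := by
  have : ∀ f : piFinset (fun i => (n i).divisors), Finite (LyndonNecklace d q f) :=
    fun f => finite_lyndonNecklace (ne_zero_of_mem_piFinset_divisors f.2)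
  rw [nCount, ← Nat.card_eq_of_bijective _ (tileLyndon_bijective hn), Nat.card_sigma]
  exact sum_coe_sort _ (lCount d q)

end MultidimNecklace

/-- `N(n) = ∑_{f_1 ∣ n_1} ⋯ ∑_{f_d ∣ n_d} L(f)`, and by Möbius inversion
`L(n) = ∑_{f_1 ∣ n_1} μ(n_1/f_1) ⋯ ∑_{f_d ∣ n_d} μ(n_d/f_d) N(f)`. -/
theorem multidim_necklace_lyndon_relation (d q : ℕ) (n : Fin d → ℕ) (hn : ∀ i, 0 < n i) :
    (nCount d q n = ∑ f ∈ Fintype.piFinset (fun i => (n i).divisors), lCount d q f) ∧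
      ((lCount d q n : ℤ) = ∑ f ∈ Fintype.piFinset (fun i => (n i).divisors),
        (∏ i, ArithmeticFunction.moebius (n i / f i)) * (nCount d q f : ℤ)) := by
  refine ⟨MultidimNecklace.nCount_eq_sum_lCount fun i => (hn i).ne', ?_⟩
  refine (sum_piFinset_divisors_prod_moebius_smul (F := fun f => (nCount d q f : ℤ))
    (G := fun f => (lCount d q f : ℤ)) (fun i => (hn i).ne') fun f hf => ?_).symm
  exact_mod_cast MultidimNecklace.nCount_eq_sum_lCount (ne_zero_of_mem_piFinset_divisors hf)
end

section
/- A word w of length n over an ordered alphabet with maximal symbol q is a prefix of the canonical (lexicographically least rotation) representative of some necklace of length n + m for some m ≥ 0 if and only if for every i with 1 ≤ i ≤ n, the prefix w_1…w_i is lexicographically less than or equal to the suffix w_{n-i+1}…w_n. -/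
/-! If `v = w ++ t` is its own least rotation, comparing `v` with its rotation that starts at the
suffix of `w` of length `i` shows that this suffix is not smaller than the prefix of length `i`.

Conversely, pad `w` with `|w|` copies of the top letter `⊤`. A rotation starting at `0 < s < |w|`
begins with the suffix `w_s…`, which is at least the prefix of the same length; if it is larger,
`v` wins, and if they are equal `w` has period `s`, so the comparison moves on to the last `s`
letters of `w` against `⊤ ^ s`, and a tie there forces `w` to consist of `⊤` only. A rotation
starting in the padding begins with `⊤`, while `w` begins with a letter `< ⊤`: if the first letter
were `⊤`, every suffix would have to begin with `⊤` too. -/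

namespace List

variable {α : Type*}

theorem append_lt_append_of_lt_of_length_eq [LT α] :
    ∀ {a b : List α}, a.length = b.length → a < b → ∀ x y : List α, a ++ x < b ++ y
  | _, _, hlen, .nil, _, _ => by simp at hlen
  | _, _, _, .rel h, _, _ => .rel h
  | _, _, hlen, .cons h, x, y =>
    .cons (append_lt_append_of_lt_of_length_eq (by simpa using hlen) h x y)

theorem not_replicate_top_lt [Preorder α] [OrderTop α] :
    ∀ {k : ℕ} {l : List α}, l.length ≤ k → ¬ replicate k ⊤ < l
  | _, [], _, h => not_lt_nil _ h
  | 0, _ :: _, hl, _ => by simp at hl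
  | _ + 1, c :: _, hl, h => by
    rw [replicate_succ, cons_lt_cons_iff] at h
    rcases h with h | ⟨-, h⟩
    · exact not_top_lt h
    · exact not_replicate_top_lt (by simpa using hl) h

theorem eq_replicate_of_take_eq_drop {l : List α} {s : ℕ} {a : α} (hs : 0 < s)
    (hper : l.take (l.length - s) = l.drop s) (htail : l.drop (l.length - s) = replicate s a) :
    l = replicate l.length a := by
  have hsl : s ≤ l.length := by
    have := congrArg length htail
    simp only [length_drop, length_replicate] at this
    omega
  have hstep : ∀ j (hj : s + j < l.length), l[j] = l[s + j] := by
    intro j hj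
    have := getElem_of_eq hper (i := j) (by simp; omega)
    rwa [getElem_take, getElem_drop] at this
  have hend : ∀ j (hj : j < l.length), l.length ≤ j + s → l[j] = a := by
    intro j hj hjs
    have := getElem_of_eq htail (i := j - (l.length - s)) (by simp; omega)
    rw [getElem_drop, getElem_replicate] at this
    simpa only [Nat.add_sub_cancel' (by omega : l.length - s ≤ j)] using this
  have hall : ∀ d j (hj : j < l.length), l.length ≤ j + d → l[j] = a := by
    intro d
    induction d with
    | zero => intro j hj hd; omega
    | succ d ih =>
      intro j hj hd
      by_cases hjs : l.length ≤ j + s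
      · exact hend j hj hjs
      · rw [hstep j (by omega)]
        exact ih (s + j) (by omega) (by omega)
  exact eq_replicate_iff.2 ⟨rfl, fun b hb => by
    obtain ⟨j, hj, rfl⟩ := getElem_of_mem hb
    exact hall l.length j hj (by omega)⟩

end List

open List

variable {α : Type*}

def IsLeastRotation [LT α] (v : List α) : Prop :=
  ∀ r, ¬ v.rotate r < v

def PrefixesLeSuffixes [LT α] (w : List α) : Prop :=
  ∀ i, 0 < i → i ≤ w.length → ¬ w.drop (w.length - i) < w.take i

theorem IsLeastRotation.prefixesLeSuffixes_of_prefix [LT α] {v w : List α}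
    (hv : IsLeastRotation v) (hwv : w <+: v) : PrefixesLeSuffixes w := by
  obtain ⟨t, rfl⟩ := hwv
  intro i _ hi hlt
  apply hv (w.length - i)
  rw [rotate_eq_drop_append_take (by simp; omega), drop_append_of_le_length (by omega),
    append_assoc]
  conv_rhs => rw [← take_append_drop i w, append_assoc]
  exact append_lt_append_of_lt_of_length_eq (by simp; omega) hlt _ _

theorem isLeastRotation_replicate [Preorder α] (n : ℕ) (a : α) :
    IsLeastRotation (replicate n a) := fun r => by
  rw [rotate_replicate]
  exact List.lt_irrefl _

section LinearOrder

variable [LinearOrder α] [OrderTop α] {w : List α}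

theorem PrefixesLeSuffixes.eq_replicate_top_of_head (hw : PrefixesLeSuffixes w)
    (hhead : w.head? = some ⊤) : w = replicate w.length ⊤ := by
  obtain ⟨w', rfl⟩ := head?_eq_some_iff.1 hhead
  refine eq_replicate_iff.2 ⟨rfl, fun b hb => ?_⟩
  obtain ⟨j, hj, rfl⟩ := getElem_of_mem hb
  rw [length_cons] at hj
  have h := hw (w'.length + 1 - j) (by omega) (by simp)
  rw [length_cons, Nat.sub_sub_self hj.le, drop_eq_getElem_cons (by simpa using hj),
    (by omega : w'.length + 1 - j = (w'.length - j) + 1), take_succ_cons,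
    cons_lt_cons_iff] at h
  exact not_lt_top_iff.1 fun hlt => h (Or.inl hlt)

theorem PrefixesLeSuffixes.append_replicate_top_lt_rotate (hw : PrefixesLeSuffixes w)
    (htop : w ≠ replicate w.length ⊤) {m s : ℕ} (hs : 0 < s) (hsw : s < w.length) (hsm : s ≤ m) :
    w ++ replicate m ⊤ < (w ++ replicate m ⊤).rotate s := by
  have hrot : (w ++ replicate m ⊤).rotate s = w.drop s ++ (replicate m ⊤ ++ w.take s) := by
    rw [rotate_eq_drop_append_take (by simp; omega), drop_append_of_le_length hsw.le,
      take_append_of_le_length hsw.le, append_assoc]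
  have hv : w ++ replicate m ⊤ =
      w.take (w.length - s) ++ (w.drop (w.length - s) ++ replicate m ⊤) := by
    rw [← append_assoc, take_append_drop]
  have hper : w.take (w.length - s) ≤ w.drop s := by
    have := hw (w.length - s) (by omega) (by omega)
    rwa [Nat.sub_sub_self hsw.le, not_lt] at this
  rw [hrot, hv]
  rcases hper.lt_or_eq with hlt | heq
  · exact append_lt_append_of_lt_of_length_eq (by simp) hlt _ _
  rw [heq]
  refine append_left_lt ?_
  have htail : w.drop (w.length - s) ≤ replicate s ⊤ :=
    not_lt.1 (not_replicate_top_lt (by simp; omega))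
  rcases htail.lt_or_eq with hlt | heq'
  · rw [← Nat.add_sub_cancel' hsm, replicate_add, append_assoc]
    exact append_lt_append_of_lt_of_length_eq (by simp; omega) hlt _ _
  · exact absurd (eq_replicate_of_take_eq_drop hs heq heq') htop

theorem cons_append_replicate_top_lt_rotate {a : α} (ha : a < ⊤) {m s : ℕ}
    (hws : w.length < s) (hsm : s < (a :: w ++ replicate m ⊤).length) :
    a :: w ++ replicate m ⊤ < (a :: w ++ replicate m ⊤).rotate s := by
  simp only [length_append, length_cons, length_replicate] at hsm
  obtain ⟨k, hk⟩ := Nat.exists_eq_add_one_of_ne_zero (by omega : m - (s - (w.length + 1)) ≠ 0)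
  rw [rotate_eq_drop_append_take (by simp; omega), drop_append, drop_eq_nil_of_le (by simp; omega),
    drop_replicate, length_cons, nil_append, hk, replicate_succ, cons_append, cons_append]
  exact Lex.rel ha

theorem PrefixesLeSuffixes.isLeastRotation_append_replicate_top (hw : PrefixesLeSuffixes w)
    {m : ℕ} (hm : w.length ≤ m) : IsLeastRotation (w ++ replicate m ⊤) := by
  by_cases htop : w = replicate w.length ⊤
  · rw [htop, ← replicate_add]
    exact isLeastRotation_replicate _ _
  obtain ⟨a, w', rfl⟩ := exists_cons_of_ne_nil (show w ≠ [] from fun h => htop (by simp [h]))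
  have ha : a < ⊤ := lt_top_iff_ne_top.2 fun h => htop (hw.eq_replicate_top_of_head (by simp [h]))
  intro r
  rw [← rotate_mod]
  have hs := Nat.mod_lt r (show 0 < (a :: w' ++ replicate m ⊤).length by simp)
  generalize r % _ = s at hs ⊢
  rcases Nat.eq_zero_or_pos s with rfl | hs0
  · rw [rotate_zero]
    exact List.lt_irrefl _
  rcases lt_or_ge s (w'.length + 1) with hsw | hsw
  · exact (hw.append_replicate_top_lt_rotate htop hs0 hsw (by simp at hm; omega)).not_gt
  · exact (cons_append_replicate_top_lt_rotate ha hsw hs).not_gt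

end LinearOrder

theorem prenecklace_characterization_general (q n : ℕ) (w : List (Fin q))
    (hl : w.length = n) :
    (∃ (m : ℕ) (v : List (Fin q)), v.length = n + m ∧ w <+: v ∧
        ∀ r : ℕ, ¬ List.Lex (· < ·) (v.rotate r) v) ↔
      ∀ i : ℕ, 1 ≤ i → i ≤ n → ¬ List.Lex (· < ·) (w.drop (n - i)) (w.take i) := by
  subst hl
  constructor
  · rintro ⟨m, v, -, hwv, hv⟩
    exact IsLeastRotation.prefixesLeSuffixes_of_prefix hv hwv
  · intro hw
    cases q with
    | zero =>
      cases w with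
      | nil => exact ⟨0, [], rfl, prefix_rfl, fun r h => by simp at h⟩
      | cons a _ => exact a.elim0
    | succ q =>
      exact ⟨w.length, w ++ replicate w.length ⊤, by simp, prefix_append _ _,
        PrefixesLeSuffixes.isLeastRotation_append_replicate_top hw le_rfl⟩

/-- A word `w` of length `n ≥ 1` over the ordered alphabet `Fin q` is a prefix
of the canonical (lexicographically least rotation) representative of some
necklace of length `n + m` for some `m ≥ 0` iff for every `1 ≤ i ≤ n` the
prefix `w_1…w_i` is lexicographically ≤ the suffix `w_{n-i+1}…w_n`. -/
theorem prenecklace_characterization (q n : ℕ) (w : List (Fin q))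
    (hl : w.length = n) (hn : 0 < n) :
    (∃ (m : ℕ) (v : List (Fin q)), v.length = n + m ∧ w <+: v ∧
        ∀ r : ℕ, ¬ List.Lex (· < ·) (v.rotate r) v) ↔
      ∀ i : ℕ, 1 ≤ i → i ≤ n → ¬ List.Lex (· < ·) (w.drop (n - i)) (w.take i) :=
  prenecklace_characterization_general q n w hl
end

section
/- Let w be a 1D prenecklace of length n−1 over the ordered alphabet {1,…,q}, and let p = |lyn(w)| be the length of the longest prefix of w that is a Lyndon word. Then w · b is a prenecklace of length n if and only if w_{n−p} ≤ b ≤ q; moreover |lyn(w·b)| = p if b = w_{n−p} and |lyn(w·b)| = n if b > w_{n−p}. -/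
/-! A prenecklace `y` dominates its prefixes: each suffix `y.drop r` is lexicographically at least
the prefix of `y` of the same length, because `y` is a prefix of a necklace `v` and
`v ≤ v.rotate r`. Let `w` have period `p = |lyn w|` and let `c` be the letter continuing that
period. Then `w ++ [c]` is a prefix of a power of the Lyndon word `lyn w`, hence a prenecklace
with the same `lyn`. Raising the last letter to `b > c` makes every proper suffix of `w ++ [b]`
strictly exceed the prefix of the same length, so `w ++ [b]` is Lyndon; lowering it to `b < c`
makes the rotation by `p` of any necklace extending `w ++ [b]` smaller than that necklace.
That a prenecklace `w` has period `|lyn w|` at all follows from these three cases by induction on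
its length, since a Lyndon word has no proper period. -/

/-- A word `u` over the ordered alphabet `Fin q` is Lyndon if it is nonempty
and strictly lexicographically smaller than all its proper non-trivial rotations. -/
def IsLyndon (q : ℕ) (u : List (Fin q)) : Prop :=
  u ≠ [] ∧ ∀ r : ℕ, 0 < r → r < u.length → List.Lex (· < ·) u (u.rotate r)

/-- A word is a prenecklace if it is a prefix of the canonical representative
(the lexicographically least rotation) of some necklace, i.e. of some word
that is ≤ all of its rotations. -/
def IsPrenecklace (q : ℕ) (w : List (Fin q)) : Prop :=
  ∃ v : List (Fin q), w <+: v ∧ v ≠ [] ∧ ∀ r : ℕ, ¬ List.Lex (· < ·) (v.rotate r) v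

/-- `p` is the length of `lyn v`, the longest prefix of `v` that is Lyndon. -/
def IsLynLen (q : ℕ) (v : List (Fin q)) (p : ℕ) : Prop :=
  IsLyndon q (v.take p) ∧ p ≤ v.length ∧
    ∀ p' : ℕ, p < p' → p' ≤ v.length → ¬ IsLyndon q (v.take p')

namespace List

variable {α : Type*}

theorem hasPeriod_iff_drop_prefix {w : List α} {p : ℕ} : HasPeriod w p ↔ w.drop p <+: w := by
  rw [HasPeriod]
  conv_rhs => rw [← prefix_append_right_inj (w.take p), take_append_drop]

theorem HasPeriod.append_getD {w : List α} {p : ℕ} (h : HasPeriod w p) (hp : 0 < p)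
    (hpw : p ≤ w.length) (d : α) : HasPeriod (w ++ [w.getD (w.length - p) d]) p := by
  rw [hasPeriod_iff_getElem?] at h ⊢
  intro i hi
  simp only [length_append, length_singleton] at hi
  rcases Nat.lt_or_ge (i + p) w.length with hip | hip
  · rw [getElem?_append_left (by omega), getElem?_append_left hip]
    exact h i (by omega)
  · obtain rfl : i = w.length - p := by omega
    rw [getElem?_append_left (by omega), Nat.sub_add_cancel hpw, getElem?_concat_length,
      getD_eq_getElem?_getD, getElem?_eq_getElem (by omega), Option.getD_some]

theorem flatten_replicate_append_comm (x y : List α) (K : ℕ) :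
    (replicate K (x ++ y)).flatten ++ x = x ++ (replicate K (y ++ x)).flatten := by
  induction K with
  | zero => simp
  | succ K ih => simp only [replicate_succ, flatten_cons, append_assoc, ih]

theorem rotate_one_flatten_replicate (u : List α) (K : ℕ) :
    (replicate K u).flatten.rotate 1 = (replicate K (u.rotate 1)).flatten := by
  rcases u with _ | ⟨a, t⟩
  · simp
  rcases K with _ | K
  · simp
  have := flatten_replicate_append_comm [a] t K
  simp_all [replicate_succ, rotate_cons_succ]

theorem rotate_flatten_replicate (u : List α) (K s : ℕ) :
    (replicate K u).flatten.rotate s = (replicate K (u.rotate s)).flatten := by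
  induction s with
  | zero => simp
  | succ s ih => rw [← rotate_rotate, ih, rotate_one_flatten_replicate, rotate_rotate]

theorem HasPeriod.prefix_flatten_replicate {y u : List α} {p : ℕ} (h : HasPeriod y p)
    (hu : u.length = p) (hyu : y.take p <+: u) {K : ℕ} (hK : y.length ≤ K * p) :
    y <+: (replicate K u).flatten := by
  induction K generalizing y with
  | zero => simp_all
  | succ K ih =>
    rw [replicate_succ, flatten_cons, ← take_append_drop p y]
    rcases le_or_gt y.length p with hy | hy
    · rw [drop_eq_nil_of_le hy, append_nil]
      exact hyu.trans (prefix_append _ _)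
    · rw [hyu.eq_of_length (by simp; omega)]
      refine (prefix_append_right_inj _).mpr (ih (h.infix (drop_suffix p y).isInfix) ?_ ?_)
      · exact ((hasPeriod_iff_drop_prefix.mp h).take p).trans hyu
      · simp only [length_drop]; rw [Nat.succ_mul] at hK; omega

variable [LinearOrder α]

theorem append_lt_append_of_lt_of_length_eq_s14 {a b : List α} (h : a < b) (hl : a.length = b.length)
    (c d : List α) : a ++ c < b ++ d := by
  induction h with
  | nil => simp at hl
  | cons _ ih => exact Lex.cons (ih (by simpa using hl))
  | rel hab => exact Lex.rel hab

theorem append_lt_append_left_iff (c : List α) {a b : List α} : c ++ a < c ++ b ↔ a < b := by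
  induction c with
  | nil => rfl
  | cons x c ih => simp [ih]

theorem take_le_take_of_lt {a b : List α} (h : a < b) (m : ℕ) : a.take m ≤ b.take m := by
  induction h generalizing m with
  | nil => exact not_lt.mp fun h => by simp at h
  | cons _ ih =>
    rcases m with _ | m
    · exact le_rfl
    · exact cons_le_cons _ (ih m)
  | rel hab =>
    rcases m with _ | m
    · exact le_rfl
    · exact le_of_lt (Lex.rel hab)

theorem take_le_take_of_le {a b : List α} (h : a ≤ b) (m : ℕ) : a.take m ≤ b.take m := by
  rcases h.lt_or_eq with h | rfl
  · exact take_le_take_of_lt h m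
  · exact le_rfl

end List

open List

def IsNecklace (q : ℕ) (v : List (Fin q)) : Prop := ∀ r : ℕ, ¬ List.Lex (· < ·) (v.rotate r) v

variable {q : ℕ}

theorem IsLyndon.pos_of_take {y : List (Fin q)} {p : ℕ} (h : IsLyndon q (y.take p)) : 0 < p :=
  Nat.pos_of_ne_zero fun hp => h.1 (by rw [hp, take_zero])

theorem IsLyndon.isLynLen_length {w : List (Fin q)} (h : IsLyndon q w) : IsLynLen q w w.length :=
  ⟨by rwa [take_length], le_rfl, fun _ h1 h2 => absurd h2 (by omega)⟩

theorem IsLyndon.lt_rotate {u : List (Fin q)} (hu : IsLyndon q u) {r : ℕ} (hr : ¬ u.length ∣ r) :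
    u < u.rotate r := by
  rw [← rotate_mod]
  exact hu.2 _ (Nat.pos_of_ne_zero (mt Nat.dvd_of_mod_eq_zero hr))
    (Nat.mod_lt _ (length_pos_iff.mpr hu.1))

theorem IsLyndon.isNecklace_flatten_replicate {u : List (Fin q)} (hu : IsLyndon q u) (K : ℕ) :
    IsNecklace q (replicate K u).flatten := by
  intro r
  show ¬ (_ : List (Fin q)) < _
  rw [not_lt, rotate_flatten_replicate]
  by_cases hr : u.length ∣ r
  · obtain ⟨k, rfl⟩ := hr
    rw [rotate_length_mul]
  · rcases K with _ | K
    · exact le_rfl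
    · simp only [replicate_succ, flatten_cons]
      exact (append_lt_append_of_lt_of_length_eq_s14 (hu.lt_rotate hr) (length_rotate _ _).symm _ _).le

theorem isPrenecklace_of_hasPeriod {y : List (Fin q)} {p : ℕ} (hu : IsLyndon q (y.take p))
    (hy : HasPeriod y p) (hpy : p ≤ y.length) : IsPrenecklace q y := by
  have hp := hu.pos_of_take
  refine ⟨(replicate y.length (y.take p)).flatten,
    hy.prefix_flatten_replicate (length_take_of_le hpy) prefix_rfl
      (Nat.le_mul_of_pos_right _ hp), ?_, hu.isNecklace_flatten_replicate _⟩
  have hy0 : y ≠ [] := by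
    rintro rfl
    exact hu.1 take_nil
  simp [flatten_eq_nil_iff, hy0, hp.ne']

theorem IsLyndon.isPrenecklace {w : List (Fin q)} (h : IsLyndon q w) : IsPrenecklace q w :=
  isPrenecklace_of_hasPeriod (by rwa [take_length]) (hasPeriod_of_length_le _ _ le_rfl) le_rfl

theorem IsPrenecklace.of_prefix {x y : List (Fin q)} (h : IsPrenecklace q y) (hxy : x <+: y) :
    IsPrenecklace q x :=
  let ⟨v, hyv, hv, hneck⟩ := h
  ⟨v, hxy.trans hyv, hv, hneck⟩

theorem IsPrenecklace.take_le_drop {y : List (Fin q)} (h : IsPrenecklace q y) (r : ℕ) :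
    y.take (y.length - r) ≤ y.drop r := by
  obtain ⟨v, hyv, -, hv⟩ := h
  obtain hr | hr := lt_or_ge y.length r
  · simp [Nat.sub_eq_zero_of_le hr.le, drop_eq_nil_of_le hr.le]
  have hlen := hyv.length_le
  calc y.take (y.length - r) = v.take (y.length - r) :=
        (hyv.take _).eq_of_length (by simp; omega)
    _ ≤ (v.rotate r).take (y.length - r) := take_le_take_of_le (not_lt.mp (hv r)) _
    _ = y.drop r := by
      rw [rotate_eq_drop_append_take (by omega), take_append_of_le_length (by simp; omega)]
      simpa [eq_comm] using prefix_iff_eq_take.mp (hyv.drop r)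

theorem IsPrenecklace.isLyndon_append {w : List (Fin q)} {b c : Fin q}
    (h : IsPrenecklace q (w ++ [c])) (hcb : c < b) : IsLyndon q (w ++ [b]) := by
  refine ⟨by simp, fun r hr0 hr => ?_⟩
  simp only [length_append, length_singleton] at hr
  have key : (w ++ [b]).take (w.length + 1 - r) < (w ++ [b]).drop r := calc
    (w ++ [b]).take (w.length + 1 - r) = (w ++ [c]).take (w.length + 1 - r) := by
      rw [take_append_of_le_length (by omega), take_append_of_le_length (by omega)]
    _ ≤ (w ++ [c]).drop r := by simpa using h.take_le_drop r
    _ = w.drop r ++ [c] := drop_append_of_le_length (by omega)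
    _ < w.drop r ++ [b] := (append_lt_append_left_iff _).mpr (Lex.rel hcb)
    _ = (w ++ [b]).drop r := (drop_append_of_le_length (by omega)).symm
  calc w ++ [b] = (w ++ [b]).take (w.length + 1 - r) ++ (w ++ [b]).drop (w.length + 1 - r) :=
        (take_append_drop _ _).symm
    _ < (w ++ [b]).drop r ++ (w ++ [b]).take r :=
        append_lt_append_of_lt_of_length_eq_s14 key (by simp) _ _
    _ = (w ++ [b]).rotate r := (rotate_eq_drop_append_take (by simp; omega)).symm

theorem IsPrenecklace.le_of_hasPeriod_append {w : List (Fin q)} {b c : Fin q} {p : ℕ}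
    (h : IsPrenecklace q (w ++ [b])) (hc : HasPeriod (w ++ [c]) p) (hp : 0 < p)
    (hpw : p ≤ w.length) : c ≤ b := by
  have hborder : (w ++ [c]).drop p = (w ++ [b]).take (w.length + 1 - p) := by
    rw [take_append_of_le_length (by omega), ← take_append_of_le_length (l₂ := [c]) (by omega)]
    simpa using prefix_iff_eq_take.mp (hasPeriod_iff_drop_prefix.mp hc)
  have := h.take_le_drop p
  rw [length_append, length_singleton, ← hborder, drop_append_of_le_length hpw,
    drop_append_of_le_length hpw] at this
  by_contra! hbc
  exact not_lt.mpr this ((append_lt_append_left_iff _).mpr (Lex.rel hbc))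

theorem IsLyndon.not_hasPeriod {z : List (Fin q)} (hz : IsLyndon q z) {p : ℕ} (hp : 0 < p)
    (hpz : p < z.length) : ¬ HasPeriod z p := by
  intro h
  have hborder : z.drop p = z.take (z.length - p) := by
    simpa using prefix_iff_eq_take.mp (hasPeriod_iff_drop_prefix.mp h)
  have hsplit : z.drop p ++ z.drop (z.length - p) = z := by rw [hborder, take_append_drop]
  have hlt : z.drop (z.length - p) < z.take p := (append_lt_append_left_iff (z.drop p)).mp <|
    calc z.drop p ++ z.drop (z.length - p) = z := hsplit
      _ < z.rotate p := hz.2 p hp hpz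
      _ = z.drop p ++ z.take p := rotate_eq_drop_append_take hpz.le
  have hrot : z.rotate (z.length - p) < z := calc
    z.rotate (z.length - p) = z.drop (z.length - p) ++ z.drop p := by
      rw [rotate_eq_drop_append_take (by omega), hborder]
    _ < z.take p ++ z.drop p := append_lt_append_of_lt_of_length_eq_s14 hlt (by simp; omega) _ _
    _ = z := take_append_drop _ _
  exact lt_asymm (hz.2 _ (by omega) (by omega)) hrot

theorem isLynLen_of_hasPeriod {y : List (Fin q)} {p : ℕ} (hu : IsLyndon q (y.take p))
    (hpy : p ≤ y.length) (hy : HasPeriod y p) : IsLynLen q y p :=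
  ⟨hu, hpy, fun _ hpp' hp'y hlyn => hlyn.not_hasPeriod hu.pos_of_take (by simp; omega)
    (hy.infix (take_prefix _ _).isInfix)⟩

theorem IsLynLen.unique {w : List (Fin q)} {p₁ p₂ : ℕ} (h₁ : IsLynLen q w p₁)
    (h₂ : IsLynLen q w p₂) : p₁ = p₂ := by
  by_contra hne
  rcases Nat.lt_or_gt_of_ne hne with h | h
  · exact h₁.2.2 p₂ h h₂.2.1 h₂.1
  · exact h₂.2.2 p₁ h h₁.2.1 h₁.1

theorem exists_isLynLen {w : List (Fin q)} (hw : w ≠ []) : ∃ p, IsLynLen q w p := by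
  classical
  have hone : IsLyndon q (w.take 1) :=
    ⟨by simpa using hw, fun r hr0 hr => by simp at hr; omega⟩
  exact ⟨Nat.findGreatest (fun t => IsLyndon q (w.take t)) w.length,
    Nat.findGreatest_spec (P := fun t => IsLyndon q (w.take t)) (length_pos_iff.mpr hw) hone,
    Nat.findGreatest_le _, fun _ => Nat.findGreatest_is_greatest⟩

theorem IsLynLen.isLyndon_take_append {w : List (Fin q)} {p : ℕ} (hp : IsLynLen q w p)
    (c : Fin q) : IsLyndon q ((w ++ [c]).take p) := by
  rw [take_append_of_le_length hp.2.1]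
  exact hp.1

theorem IsLynLen.isPrenecklace_append {w : List (Fin q)} {p : ℕ} {c : Fin q}
    (hp : IsLynLen q w p) (hc : HasPeriod (w ++ [c]) p) : IsPrenecklace q (w ++ [c]) :=
  isPrenecklace_of_hasPeriod (hp.isLyndon_take_append c) hc (hp.2.1.trans (by simp))

theorem IsLynLen.append {w : List (Fin q)} {p : ℕ} {c : Fin q}
    (hp : IsLynLen q w p) (hc : HasPeriod (w ++ [c]) p) : IsLynLen q (w ++ [c]) p :=
  isLynLen_of_hasPeriod (hp.isLyndon_take_append c) (hp.2.1.trans (by simp)) hc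

theorem IsPrenecklace.hasPeriod {w : List (Fin q)} (h : IsPrenecklace q w) {p : ℕ}
    (hp : IsLynLen q w p) : HasPeriod w p := by
  induction w using reverseRecOn generalizing p with
  | nil => exact hasPeriod_empty p
  | append_singleton w b ih =>
    rcases eq_or_ne w [] with rfl | hw
    · exact hasPeriod_of_length_le _ _ hp.1.pos_of_take
    obtain ⟨p', hp'⟩ := exists_isLynLen hw
    have hp'0 := hp'.1.pos_of_take
    obtain ⟨c, hc⟩ : ∃ c, HasPeriod (w ++ [c]) p' :=
      ⟨_, (ih (h.of_prefix (prefix_append _ _)) hp').append_getD hp'0 hp'.2.1 b⟩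
    rcases (h.le_of_hasPeriod_append hc hp'0 hp'.2.1).lt_or_eq with hcb | rfl
    · rw [hp.unique ((hp'.isPrenecklace_append hc).isLyndon_append hcb).isLynLen_length]
      exact hasPeriod_of_length_le _ _ le_rfl
    · rwa [hp.unique (hp'.append hc)]

theorem prenecklace_extension_general (q n : ℕ) (hq : 0 < q)
    (w : List (Fin q)) (hw : w.length = n - 1) (hpre : IsPrenecklace q w)
    (p : ℕ) (hp : IsLynLen q w p) (b : Fin q) :
    (IsPrenecklace q (w ++ [b]) ↔ w.getD (n - p - 1) ⟨0, hq⟩ ≤ b) ∧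
      (b = w.getD (n - p - 1) ⟨0, hq⟩ → IsLynLen q (w ++ [b]) p) ∧
      (w.getD (n - p - 1) ⟨0, hq⟩ < b → IsLynLen q (w ++ [b]) n) := by
  have hp0 : 0 < p := hp.1.pos_of_take
  have hpw : p ≤ w.length := hp.2.1
  have hc : HasPeriod (w ++ [w.getD (n - p - 1) ⟨0, hq⟩]) p := by
    rw [show n - p - 1 = w.length - p by omega]
    exact (hpre.hasPeriod hp).append_getD hp0 hpw _
  have hlen : (w ++ [b]).length = n := by simp; omega
  refine ⟨⟨fun hb => hb.le_of_hasPeriod_append hc hp0 hpw, fun hcb => ?_⟩,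
    fun hbc => hbc ▸ hp.append hc, fun hcb => ?_⟩
  · rcases hcb.lt_or_eq with hcb | rfl
    · exact ((hp.isPrenecklace_append hc).isLyndon_append hcb).isPrenecklace
    · exact hp.isPrenecklace_append hc
  · rw [← hlen]
    exact ((hp.isPrenecklace_append hc).isLyndon_append hcb).isLynLen_length

/-- Fundamental lemma of necklace generation (Cattell–Ruskey–Sawada–Serra–Miers):
if `w` is a prenecklace of length `n-1` and `p = |lyn(w)|`, then `w·b` is a
prenecklace iff `w_{n-p} ≤ b`; moreover `|lyn(w·b)| = p` when `b = w_{n-p}`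
and `|lyn(w·b)| = n` when `b > w_{n-p}`. -/
theorem prenecklace_extension (q n : ℕ) (hq : 0 < q) (hn : 2 ≤ n)
    (w : List (Fin q)) (hw : w.length = n - 1) (hpre : IsPrenecklace q w)
    (p : ℕ) (hp : IsLynLen q w p) (b : Fin q) :
    (IsPrenecklace q (w ++ [b]) ↔ w.getD (n - p - 1) ⟨0, hq⟩ ≤ b) ∧
      (b = w.getD (n - p - 1) ⟨0, hq⟩ → IsLynLen q (w ++ [b]) p) ∧
      (w.getD (n - p - 1) ⟨0, hq⟩ < b → IsLynLen q (w ++ [b]) n) :=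
  prenecklace_extension_general q n hq w hw hpre p hp b
end

section
/- If two cyclic words w, v of length n share a common cyclic subword of length m (1 ≤ m ≤ n), then the multiset of cyclic subwords of w and the multiset of cyclic subwords of v (each of total size n², counting all lengths 1..n and all n starting positions) have intersection of size at least m(m+1)/2; hence the overlap distance satisfies O(w,v) ≤ 1 − m(m+1)/(2n²). -/
/-- The multiset of all `n²` cyclic subwords of a cyclic word `w` of length
`n`: one subword of each length `1 ≤ ℓ ≤ n` starting at each of the `n`
positions, with multiplicity. -/
def cycSubwords (n q : ℕ) (w : ZMod n → Fin q) : Multiset (List (Fin q)) :=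
  ((Finset.range n) ×ˢ Finset.Icc 1 n).val.map
    fun x => (List.range x.2).map fun j => w (((x.1 + j : ℕ) : ZMod n))

/-- The overlap distance between cyclic words `u, v` of length `n`:
`O(u,v) = 1 − |S(u) ∩ S(v)| / n²` where `S(w)` is the multiset of all cyclic
subwords of `w` and the intersection takes minimum multiplicities. -/
def odist (n q : ℕ) (u v : ZMod n → Fin q) : ℚ :=
  1 - (Multiset.card (cycSubwords n q u ∩ cycSubwords n q v) : ℚ) / (n ^ 2 : ℚ)

/-! Every contiguous factor of a cyclic subword `w[i, i + ℓ)` is itself a cyclic subword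
`w[i + t, i + t + s)`, and distinct positions `(t, s)` of the factor give distinct index pairs
because `t < ℓ ≤ n`. So the `m(m+1)/2` factors of a common subword of length `m`, counted by
position, form a submultiset of both `S(w)` and `S(v)`, hence of their intersection. -/

section CyclicSubword

variable {n : ℕ} {α : Type*}

def cycSubword (w : ZMod n → α) (i ℓ : ℕ) : List α :=
  (List.range ℓ).map fun j => w ((i + j : ℕ) : ZMod n)

theorem cycSubwords_eq_map (q : ℕ) (w : ZMod n → Fin q) :
    cycSubwords n q w = ((Finset.range n) ×ˢ Finset.Icc 1 n).val.map
      fun x => cycSubword w x.1 x.2 :=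
  rfl

theorem cycSubword_mod (w : ZMod n → α) (i ℓ : ℕ) :
    cycSubword w (i % n) ℓ = cycSubword w i ℓ := by
  simp only [cycSubword, Nat.cast_add, ZMod.natCast_mod]

theorem take_drop_cycSubword (w : ZMod n → α) {i ℓ t s : ℕ} (h : t + s ≤ ℓ) :
    ((cycSubword w i ℓ).drop t).take s = cycSubword w (i + t) s := by
  apply List.ext_getElem
  · simp only [cycSubword, List.length_take, List.length_drop, List.length_map,
      List.length_range]
    omega
  · intro k _ _
    simp only [cycSubword, List.getElem_take, List.getElem_drop, List.getElem_map,
      List.getElem_range, add_assoc]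

end CyclicSubword

section Slices

variable {α : Type*}

def slices (a : List α) : Multiset (List α) :=
  ((Finset.range a.length).sigma fun t => Finset.Icc 1 (a.length - t)).val.map
    fun p => (a.drop p.1).take p.2

theorem two_mul_card_slices (a : List α) :
    2 * Multiset.card (slices a) = a.length * (a.length + 1) := by
  set m := a.length
  have hreflect : ∑ t ∈ Finset.range m, (m - t) = ∑ t ∈ Finset.range (m + 1), t := by
    rw [← Finset.sum_range_reflect, Finset.sum_range_succ', add_zero]
    exact Finset.sum_congr rfl fun t ht => by rw [Finset.mem_range] at ht; omega
  rw [slices, Multiset.card_map, ← Finset.card_def, Finset.card_sigma]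
  simp only [Nat.card_Icc, Nat.add_sub_cancel]
  rw [hreflect, mul_comm, Finset.sum_range_id_mul_two, Nat.add_sub_cancel, mul_comm]

end Slices

theorem slices_cycSubword_le_cycSubwords {n q i ℓ : ℕ} (w : ZMod n → Fin q) (hi : i < n)
    (hℓ : ℓ ≤ n) : slices (cycSubword w i ℓ) ≤ cycSubwords n q w := by
  set B := (Finset.range ℓ).sigma fun t => Finset.Icc 1 (ℓ - t)
  have hB : ∀ p ∈ B, p.1 < ℓ ∧ 1 ≤ p.2 ∧ p.2 ≤ ℓ - p.1 := by
    intro p hp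
    simpa only [B, Finset.mem_sigma, Finset.mem_range, Finset.mem_Icc] using hp
  let g : (_ : ℕ) × ℕ → ℕ × ℕ := fun p => ((i + p.1) % n, p.2)
  have hslices : slices (cycSubword w i ℓ) = (B.val.map g).map fun x => cycSubword w x.1 x.2 := by
    have hlen : (cycSubword w i ℓ).length = ℓ := by simp [cycSubword]
    simp only [slices, hlen, Multiset.map_map]
    refine Multiset.map_congr rfl fun p hp => ?_
    obtain ⟨-, hs1, hs⟩ := hB p hp
    simp only [Function.comp, g, cycSubword_mod]
    exact take_drop_cycSubword w (by omega)
  have hg : Set.InjOn g B := by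
    rintro ⟨t, s⟩ hp ⟨t', s'⟩ hp' hgp
    obtain ⟨ht, -⟩ : t < ℓ ∧ _ := hB _ hp
    obtain ⟨ht', -⟩ : t' < ℓ ∧ _ := hB _ hp'
    simp only [g, Prod.mk.injEq] at hgp
    have htt' : t % n = t' % n := Nat.ModEq.add_left_cancel' i hgp.1
    rw [Nat.mod_eq_of_lt (by omega), Nat.mod_eq_of_lt (by omega)] at htt'
    rw [htt', hgp.2]
  rw [hslices, cycSubwords_eq_map]
  refine Multiset.map_le_map ((Multiset.le_iff_subset (Multiset.Nodup.map_on hg B.nodup)).2 ?_)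
  intro x hx
  obtain ⟨p, hp, rfl⟩ := Multiset.mem_map.1 hx
  obtain ⟨ht, hs1, hs⟩ := hB p hp
  simp only [g, Finset.mem_val, Finset.mem_product, Finset.mem_range, Finset.mem_Icc]
  exact ⟨Nat.mod_lt _ (by omega), hs1, by omega⟩

theorem slices_le_cycSubwords {n q : ℕ} {w : ZMod n → Fin q} {a : List (Fin q)}
    (ha : a ∈ cycSubwords n q w) : slices a ≤ cycSubwords n q w := by
  rw [cycSubwords_eq_map] at ha
  obtain ⟨⟨i, ℓ⟩, hiℓ, rfl⟩ := Multiset.mem_map.1 ha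
  simp only [Finset.mem_val, Finset.mem_product, Finset.mem_range, Finset.mem_Icc] at hiℓ
  exact slices_cycSubword_le_cycSubwords w hiℓ.1 hiℓ.2.2

theorem odist_le_of_le_two_mul_card {n q : ℕ} {u v : ZMod n → Fin q} {x : ℚ}
    (hx : x ≤ 2 * Multiset.card (cycSubwords n q u ∩ cycSubwords n q v)) :
    odist n q u v ≤ 1 - x / (2 * n ^ 2) := by
  rw [odist, ← mul_div_mul_left _ ((n : ℚ) ^ 2) two_ne_zero]
  gcongr

theorem common_subword_overlap_bound_general (n q m : ℕ)
    (w v : ZMod n → Fin q)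
    (h : ∃ a : List (Fin q), a.length = m ∧
        a ∈ cycSubwords n q w ∧ a ∈ cycSubwords n q v) :
    m * (m + 1) ≤ 2 * Multiset.card (cycSubwords n q w ∩ cycSubwords n q v) ∧
      odist n q w v ≤ 1 - (m * (m + 1) : ℚ) / (2 * n ^ 2) := by
  obtain ⟨a, rfl, haw, hav⟩ := h
  have hcard : a.length * (a.length + 1) ≤
      2 * Multiset.card (cycSubwords n q w ∩ cycSubwords n q v) := by
    rw [← two_mul_card_slices]
    gcongr
    exact le_inf (slices_le_cycSubwords haw) (slices_le_cycSubwords hav)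
  exact ⟨hcard, odist_le_of_le_two_mul_card (by exact_mod_cast hcard)⟩

/-- If two cyclic words `w, v` of length `n` share a common cyclic subword of
length `m` (`1 ≤ m ≤ n`), then their multisets of cyclic subwords intersect in
at least `m(m+1)/2` elements, hence `O(w,v) ≤ 1 − m(m+1)/(2n²)`. -/
theorem common_subword_overlap_bound (n q m : ℕ) (hm : 1 ≤ m) (hmn : m ≤ n)
    (w v : ZMod n → Fin q)
    (h : ∃ a : List (Fin q), a.length = m ∧
        a ∈ cycSubwords n q w ∧ a ∈ cycSubwords n q v) :
    m * (m + 1) ≤ 2 * Multiset.card (cycSubwords n q w ∩ cycSubwords n q v) ∧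
      odist n q w v ≤ 1 - (m * (m + 1) : ℚ) / (2 * n ^ 2) :=
  common_subword_overlap_bound_general n q m w v h
end
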